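/- For continuous f ∈ 𝓘, the function v^f(x) = ∫₀^{|x|} u^{(-f)}(y) exp(2∫₀ʸ f(u)du) dy is C² on ℝ and satisfies (v^f)''(x) − 2 f(|x|) |(v^f)'(x)| = 1 for all x ∈ ℝ. -/

import Mathlib

open MeasureTheory intervalIntegral

/-- `f` is bounded on every compact subset of `ℝ`. -/
def BddOnCompacts (f : ℝ → ℝ) : Prop :=
  ∀ r : ℝ, ∃ C : ℝ, ∀ x ∈ Set.Icc (-r) r, |f x| ≤ C

/-- The transform `u^f(x) = ∫₀ˣ exp(2∫₀ʸ f(u)du) dy`. -/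
noncomputable def uf (f : ℝ → ℝ) (x : ℝ) : ℝ :=
  ∫ y in (0:ℝ)..x, Real.exp (2 * ∫ u in (0:ℝ)..y, f u)

/-- `M^f = exp(2 ∫_ℝ |f|)`. -/
noncomputable def Mf (f : ℝ → ℝ) : ℝ :=
  Real.exp (2 * ∫ u : ℝ, |f u|)

/-- The transform `v^f(x) = ∫₀^{|x|} u^{(-f)}(y) exp(2∫₀ʸ f(u)du) dy`. -/
noncomputable def vf (f : ℝ → ℝ) (x : ℝ) : ℝ :=
  ∫ y in (0:ℝ)..|x|, uf (fun u => -f u) y * Real.exp (2 * ∫ u in (0:ℝ)..y, f u)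

/-!
With `F = ∫₀ f` and `g = u^{(-f)} · exp (2F)`, the product rule gives `g' = 1 + 2 f g`,
and `g 0 = 0`, `g ≥ 0` on `[0, ∞)`. Since `v^f = (∫₀ g) ∘ |·|`, the natural candidates for its
derivatives are the odd extension of `g` and the even extension of `g'`. Integrating the even,
continuous function `x ↦ 1 + 2 f |x| g |x|` twice from `0` produces an even `C²` function which
agrees with `∫₀ g` on `[0, ∞)`, hence equals `v^f`, and whose first derivative has absolute
value `g |x|`.
-/

section Parity

variable {E : Type*} [NormedAddCommGroup E] [NormedSpace ℝ E] {h : ℝ → E}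

theorem Function.Even.intervalIntegral_odd (hh : h.Even) :
    (fun x => ∫ t in (0:ℝ)..x, h t).Odd := fun x =>
  calc ∫ t in (0:ℝ)..-x, h t = -∫ t in -x..0, h t := integral_symm _ _
    _ = -∫ t in (0:ℝ)..x, h (-t) := by rw [integral_comp_neg, neg_zero]
    _ = -∫ t in (0:ℝ)..x, h t := by simp only [show ∀ t, h (-t) = h t from hh]

theorem Function.Odd.intervalIntegral_even (hh : h.Odd) :
    (fun x => ∫ t in (0:ℝ)..x, h t).Even := fun x =>
  calc ∫ t in (0:ℝ)..-x, h t = -∫ t in -x..0, h t := integral_symm _ _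
    _ = -∫ t in (0:ℝ)..x, h (-t) := by rw [integral_comp_neg, neg_zero]
    _ = ∫ t in (0:ℝ)..x, h t := by
      simp only [show ∀ t, h (-t) = -h t from hh, intervalIntegral.integral_neg, neg_neg]

end Parity

theorem ContDiff.intervalIntegral_succ {E : Type*} [NormedAddCommGroup E] [NormedSpace ℝ E]
    [CompleteSpace E] {h : ℝ → E} {n : ℕ} (hh : ContDiff ℝ n h) (a : ℝ) :
    ContDiff ℝ (n + 1) (fun x => ∫ t in a..x, h t) := by
  have hderiv := hh.continuous.integral_hasStrictDerivAt a
  refine contDiff_succ_iff_deriv.2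
    ⟨fun x => (hderiv x).hasDerivAt.differentiableAt, by simp, ?_⟩
  rwa [funext fun x => (hderiv x).hasDerivAt.deriv]

noncomputable def vfIntegrand (f : ℝ → ℝ) (y : ℝ) : ℝ :=
  uf (fun u => -f u) y * Real.exp (2 * ∫ u in (0:ℝ)..y, f u)

/-- The even extension of `(vfIntegrand f)'`. -/
noncomputable def vfSecondDeriv (f : ℝ → ℝ) (x : ℝ) : ℝ :=
  1 + 2 * f |x| * vfIntegrand f |x|

noncomputable def vfDeriv (f : ℝ → ℝ) (x : ℝ) : ℝ :=
  ∫ t in (0:ℝ)..x, vfSecondDeriv f t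

section VfIntegrand

variable {f : ℝ → ℝ}

theorem vfIntegrand_zero : vfIntegrand f 0 = 0 := by
  simp [vfIntegrand, uf]

theorem vfIntegrand_nonneg {y : ℝ} (hy : 0 ≤ y) : 0 ≤ vfIntegrand f y :=
  mul_nonneg (integral_nonneg hy fun _ _ => (Real.exp_pos _).le) (Real.exp_pos _).le

theorem vfSecondDeriv_even : (vfSecondDeriv f).Even := fun x => by
  simp only [vfSecondDeriv, abs_neg]

theorem vfDeriv_odd : (vfDeriv f).Odd :=
  vfSecondDeriv_even.intervalIntegral_odd

variable (hc : Continuous f)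
include hc

theorem hasDerivAt_vfIntegrand (y : ℝ) :
    HasDerivAt (vfIntegrand f) (1 + 2 * f y * vfIntegrand f y) y := by
  have hF : HasDerivAt (fun x => ∫ u in (0:ℝ)..x, f u) (f y) y :=
    (hc.integral_hasStrictDerivAt 0 y).hasDerivAt
  have hu : HasDerivAt (uf fun u => -f u)
      (Real.exp (2 * ∫ u in (0:ℝ)..y, -f u)) y :=
    (Real.continuous_exp.comp (continuous_const.mul
      (continuous_primitive (fun _ _ => hc.neg.intervalIntegrable _ _) 0))
      |>.integral_hasStrictDerivAt 0 y).hasDerivAt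
  refine (hu.mul (hF.const_mul 2).exp).congr_deriv ?_
  rw [intervalIntegral.integral_neg, ← Real.exp_add, mul_neg, neg_add_cancel, Real.exp_zero,
    vfIntegrand]
  ring

theorem continuous_vfIntegrand : Continuous (vfIntegrand f) :=
  continuous_iff_continuousAt.2 fun x => (hasDerivAt_vfIntegrand hc x).continuousAt

theorem vfIntegrand_eq_integral (y : ℝ) :
    vfIntegrand f y = ∫ t in (0:ℝ)..y, 1 + 2 * f t * vfIntegrand f t := by
  have := continuous_vfIntegrand hc
  rw [integral_eq_sub_of_hasDerivAt (fun t _ => hasDerivAt_vfIntegrand hc t)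
    (Continuous.intervalIntegrable (by fun_prop) _ _),
    vfIntegrand_zero, sub_zero]

theorem continuous_vfSecondDeriv : Continuous (vfSecondDeriv f) := by
  have := continuous_vfIntegrand hc
  unfold vfSecondDeriv
  fun_prop

theorem vfDeriv_of_nonneg {x : ℝ} (hx : 0 ≤ x) : vfDeriv f x = vfIntegrand f x := by
  rw [vfIntegrand_eq_integral hc]
  refine integral_congr fun t ht => ?_
  rw [Set.uIcc_of_le hx] at ht
  simp only [vfSecondDeriv, abs_of_nonneg ht.1]

theorem abs_vfDeriv (x : ℝ) : |vfDeriv f x| = vfIntegrand f |x| := by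
  have hodd : |vfDeriv f x| = |vfDeriv f (|x|)| := by
    rcases abs_choice x with hx | hx <;> rw [hx]
    rw [vfDeriv_odd, abs_neg]
  rw [hodd, vfDeriv_of_nonneg hc (abs_nonneg x), abs_of_nonneg (vfIntegrand_nonneg (abs_nonneg x))]

theorem vf_eq_integral_vfDeriv : vf f = fun x => ∫ t in (0:ℝ)..x, vfDeriv f t := by
  funext x
  calc vf f x = ∫ t in (0:ℝ)..|x|, vfDeriv f t := by
        refine integral_congr fun t ht => (vfDeriv_of_nonneg hc ?_).symm
        exact (Set.uIcc_of_le (abs_nonneg x) ▸ ht).1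
    _ = ∫ t in (0:ℝ)..x, vfDeriv f t := by
        rcases abs_choice x with hx | hx <;> rw [hx]
        exact vfDeriv_odd.intervalIntegral_even x

end VfIntegrand

theorem vf_contDiff_two_and_ode_general (f : ℝ → ℝ)
    (hc : Continuous f) :
    ContDiff ℝ 2 (vf f) ∧
      ∀ x : ℝ, deriv (deriv (vf f)) x - 2 * f |x| * |deriv (vf f) x| = 1 := by
  have hv := vf_eq_integral_vfDeriv hc
  have hD2 := continuous_vfSecondDeriv hc
  have hD : ContDiff ℝ 1 (vfDeriv f) :=
    ContDiff.intervalIntegral_succ (n := 0) (contDiff_zero.2 hD2) 0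
  have hderiv : deriv (vf f) = vfDeriv f := by
    rw [hv]; exact funext (hD.continuous.deriv_integral _ 0)
  have hderiv2 : deriv (vfDeriv f) = vfSecondDeriv f := funext (hD2.deriv_integral _ 0)
  refine ⟨hv ▸ ContDiff.intervalIntegral_succ (n := 1) hD 0, fun x => ?_⟩
  rw [hderiv, hderiv2, abs_vfDeriv hc, vfSecondDeriv]
  ring

theorem vf_contDiff_two_and_ode (f : ℝ → ℝ) (hf : Integrable f) (hb : BddOnCompacts f)
    (hc : Continuous f) :
    ContDiff ℝ 2 (vf f) ∧
      ∀ x : ℝ, deriv (deriv (vf f)) x - 2 * f |x| * |deriv (vf f) x| = 1 :=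
  vf_contDiff_two_and_ode_general f hc
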